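/- For every 2×2 complex matrix ρ with tr(ρ) = 1, the expectation of the classical snapshot over the six canonical polarization measurements reconstructs ρ exactly: (1/3) · Σ_{b ∈ {H,V,D,A,R,L}} ⟨b|ρ|b⟩ · (3|b⟩⟨b| − I) = ρ. -/
import Mathlib


open Matrix Complex
open scoped ComplexOrder

noncomputable section

/-- The horizontal polarization vector `|H⟩ = (1,0)`. -/
def ketH : Fin 2 → ℂ := ![1, 0]
/-- The vertical polarization vector `|V⟩ = (0,1)`. -/
def ketV : Fin 2 → ℂ := ![0, 1]
/-- The diagonal polarization vector `|D⟩ = (|H⟩+|V⟩)/√2`. -/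
def ketD : Fin 2 → ℂ := ![(Real.sqrt 2 : ℂ)⁻¹, (Real.sqrt 2 : ℂ)⁻¹]
/-- The antidiagonal polarization vector `|A⟩ = (|H⟩−|V⟩)/√2`. -/
def ketA : Fin 2 → ℂ := ![(Real.sqrt 2 : ℂ)⁻¹, -(Real.sqrt 2 : ℂ)⁻¹]
/-- The right-circular polarization vector `|R⟩ = (|H⟩+i|V⟩)/√2`. -/
def ketR : Fin 2 → ℂ := ![(Real.sqrt 2 : ℂ)⁻¹, Complex.I * (Real.sqrt 2 : ℂ)⁻¹]
/-- The left-circular polarization vector `|L⟩ = (|H⟩−i|V⟩)/√2`. -/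
def ketL : Fin 2 → ℂ := ![(Real.sqrt 2 : ℂ)⁻¹, -Complex.I * (Real.sqrt 2 : ℂ)⁻¹]

/-- The rank-one (outer product) matrix `|b⟩⟨b|`, with entries `b i * conj (b j)`. -/
def ketbra (b : Fin 2 → ℂ) : Matrix (Fin 2) (Fin 2) ℂ := vecMulVec b (star b)

/-- The quadratic form `⟨v|A|v⟩` of a matrix `A` at the vector `v`. -/
def qform (A : Matrix (Fin 2) (Fin 2) ℂ) (v : Fin 2 → ℂ) : ℂ := star v ⬝ᵥ A.mulVec v

/-- For every 2×2 complex matrix `ρ` with `tr(ρ) = 1`, the expectation of the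
classical snapshot `3|b⟩⟨b| − I` over the six canonical polarization measurements, where outcome
`b` has probability `(1/3)⟨b|ρ|b⟩`, reconstructs `ρ` exactly. -/
theorem snapshot_expectation_reconstructs (ρ : Matrix (Fin 2) (Fin 2) ℂ)
    (hρ : ρ.trace = 1) :
    (3 : ℂ)⁻¹ • (qform ρ ketH • ((3 : ℂ) • ketbra ketH - 1) +
        qform ρ ketV • ((3 : ℂ) • ketbra ketV - 1) +
        qform ρ ketD • ((3 : ℂ) • ketbra ketD - 1) +
        qform ρ ketA • ((3 : ℂ) • ketbra ketA - 1) +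
        qform ρ ketR • ((3 : ℂ) • ketbra ketR - 1) +
        qform ρ ketL • ((3 : ℂ) • ketbra ketL - 1)) = ρ := by
  have h2 : ((Real.sqrt 2 : ℂ))⁻¹ * ((Real.sqrt 2 : ℂ))⁻¹ = (2 : ℂ)⁻¹ := by
    rw [← mul_inv, ← Complex.ofReal_mul, Real.mul_self_sqrt (by norm_num : (0:ℝ) ≤ 2)]
    norm_num
  ext i j
  fin_cases i <;> fin_cases j <;>
    simp only [qform, ketbra, ketH, ketV, ketD, ketA, ketR, ketL, Matrix.smul_apply,
      Matrix.add_apply, Matrix.sub_apply, Matrix.one_apply_eq, Matrix.one_apply_ne,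
      Matrix.vecMulVec_apply, Matrix.mulVec, dotProduct, Fin.sum_univ_two,
      Pi.star_apply, Complex.star_def, map_inv₀, Complex.conj_ofReal, _root_.map_mul,
      Complex.conj_I, map_neg, _root_.map_one, _root_.map_zero, Matrix.cons_val_zero,
      Matrix.cons_val_one, Matrix.head_cons, Fin.mk_zero, Fin.mk_one, Fin.isValue,
      smul_eq_mul, Matrix.one_apply, Matrix.of_apply, ne_eq, Fin.zero_eq_one_iff,
      Fin.one_eq_zero_iff, if_true, if_false] <;>
    norm_num
  · linear_combination ((4/1 : ℂ)*((Real.sqrt 2 : ℂ))⁻¹^2*ρ 0 0 + (2/3 : ℂ)*ρ 0 0 + (2/1 : ℂ)*((Real.sqrt 2 : ℂ))⁻¹^2*ρ 1 1 + (1/3 : ℂ)*ρ 1 1 + (-2/1 : ℂ)*((Real.sqrt 2 : ℂ))⁻¹^2*Complex.I^2*ρ 1 1 + (-1/3 : ℂ)*Complex.I^2*ρ 1 1) * h2 + ((-1/6 : ℂ)*ρ 1 1) * Complex.I_sq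
  · linear_combination ((2/1 : ℂ)*((Real.sqrt 2 : ℂ))⁻¹^2*ρ 0 1 + (2/1 : ℂ)*((Real.sqrt 2 : ℂ))⁻¹^2*ρ 1 0 + (-2/1 : ℂ)*((Real.sqrt 2 : ℂ))⁻¹^2*Complex.I^2*ρ 0 1 + (2/1 : ℂ)*((Real.sqrt 2 : ℂ))⁻¹^2*Complex.I^2*ρ 1 0 + (1/1 : ℂ)*ρ 0 1 + (1/1 : ℂ)*ρ 1 0 + (-1/1 : ℂ)*Complex.I^2*ρ 0 1 + (1/1 : ℂ)*Complex.I^2*ρ 1 0) * h2 + ((-1/2 : ℂ)*ρ 0 1 + (1/2 : ℂ)*ρ 1 0) * Complex.I_sq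
  · linear_combination ((2/1 : ℂ)*((Real.sqrt 2 : ℂ))⁻¹^2*ρ 0 1 + (2/1 : ℂ)*((Real.sqrt 2 : ℂ))⁻¹^2*ρ 1 0 + (2/1 : ℂ)*((Real.sqrt 2 : ℂ))⁻¹^2*Complex.I^2*ρ 0 1 + (-2/1 : ℂ)*((Real.sqrt 2 : ℂ))⁻¹^2*Complex.I^2*ρ 1 0 + (1/1 : ℂ)*ρ 0 1 + (1/1 : ℂ)*ρ 1 0 + (1/1 : ℂ)*Complex.I^2*ρ 0 1 + (-1/1 : ℂ)*Complex.I^2*ρ 1 0) * h2 + ((1/2 : ℂ)*ρ 0 1 + (-1/2 : ℂ)*ρ 1 0) * Complex.I_sq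
  · linear_combination ((2/1 : ℂ)*((Real.sqrt 2 : ℂ))⁻¹^2*ρ 0 0 + (-1/3 : ℂ)*ρ 0 0 + (2/1 : ℂ)*((Real.sqrt 2 : ℂ))⁻¹^2*ρ 1 1 + (1/3 : ℂ)*ρ 1 1 + (-2/1 : ℂ)*((Real.sqrt 2 : ℂ))⁻¹^2*Complex.I^2*ρ 0 0 + (2/1 : ℂ)*((Real.sqrt 2 : ℂ))⁻¹^2*Complex.I^4*ρ 1 1 + (2/3 : ℂ)*Complex.I^2*ρ 1 1 + (-1/1 : ℂ)*Complex.I^2*ρ 0 0 + (1/1 : ℂ)*Complex.I^4*ρ 1 1) * h2 + ((-1/6 : ℂ)*ρ 1 1 + (-1/2 : ℂ)*ρ 0 0 + (1/2 : ℂ)*Complex.I^2*ρ 1 1) * Complex.I_sq
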